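/- Let Q be a self-join-free CQ whose FD-extension Q+ is cyclic, and let H_pm = (V_pm, E_pm) be a pseudo-minor of H(Q+) in Tet_pm(Q+) (isomorphic to some Tetra(k)). Then for every non-trivial FD X -> y in Delta_{Q+}, not all of X union {y} is contained in V_pm. -/

import Mathlib

structure Hypergraph' (V : Type*) where
  edges : Set (Set V)
  nonempty_of_mem : ∀ e ∈ edges, e.Nonempty

namespace Hypergraph'

variable {V : Type*}

/-- The vertex set of a hypergraph: all vertices occurring in some edge. -/
def vertexSet (H : Hypergraph' V) : Set V := ⋃ e ∈ H.edges, e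

/-- Two vertices are neighbors if they appear together in some edge. -/
def Neighbors (H : Hypergraph' V) (u v : V) : Prop := ∃ e ∈ H.edges, u ∈ e ∧ v ∈ e

/-- A clique: a set of pairwise neighboring vertices. -/
def IsClique (H : Hypergraph' V) (C : Set V) : Prop := ∀ u ∈ C, ∀ v ∈ C, H.Neighbors u v

/-- Conformal: every clique is contained in some edge. -/
def Conformal (H : Hypergraph' V) : Prop := ∀ C : Set V, H.IsClique C → ∃ e ∈ H.edges, C ⊆ e

/-- A chordless cycle (x_1, ..., x_n), n ≥ 3, of distinct vertices: the neighboring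
pairs among them are exactly the consecutive (cyclically) ones. -/
def HasChordlessCycle (H : Hypergraph' V) : Prop :=
  ∃ (n : ℕ) (x : Fin (n + 3) → V), Function.Injective x ∧
    (∀ i, x i ∈ H.vertexSet) ∧
    ∀ i j : Fin (n + 3), i ≠ j → (H.Neighbors (x i) (x j) ↔ (j = i + 1 ∨ i = j + 1))

/-- A join tree: a tree on the edges of `H` such that for each vertex the set of
edges containing it induces a connected subtree (running intersection property). -/
def IsJoinTree (H : Hypergraph' V) (T : SimpleGraph ↥H.edges) : Prop :=
  T.IsTree ∧ ∀ v ∈ H.vertexSet, (T.induce {e : ↥H.edges | v ∈ e.1}).Connected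

/-- A hypergraph is acyclic if it admits a join tree. -/
def Acyclic (H : Hypergraph' V) : Prop := ∃ T : SimpleGraph ↥H.edges, H.IsJoinTree T

end Hypergraph'
/-- Vertex removal: delete `v` from the vertex set and from every edge
(dropping edges that become empty). -/
def VertexRemovalOf {V : Type*} (v : V) (H H' : Hypergraph' V) : Prop :=
  H'.edges = {f | ∃ e ∈ H.edges, f = e \ {v} ∧ f.Nonempty}

def VertexRemoval {V : Type*} (H H' : Hypergraph' V) : Prop :=
  ∃ v : V, VertexRemovalOf v H H'

/-- Edge removal: delete an edge `e` contained in some other edge `e'`. -/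
def EdgeRemoval {V : Type*} (H H' : Hypergraph' V) : Prop :=
  ∃ e ∈ H.edges, (∃ e' ∈ H.edges, e' ≠ e ∧ e ⊆ e') ∧ H'.edges = H.edges \ {e}

/-- Edge contraction: replace all occurrences of `v` by a neighbor `u`. -/
def EdgeContraction {V : Type*} [DecidableEq V] (H H' : Hypergraph' V) : Prop :=
  ∃ u v : V, u ≠ v ∧ H.Neighbors u v ∧
    H'.edges = (fun e => (fun w => if w = v then u else w) '' e) '' H.edges

def PMStep {V : Type*} [DecidableEq V] (H H' : Hypergraph' V) : Prop :=
  VertexRemoval H H' ∨ EdgeRemoval H H' ∨ EdgeContraction H H'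

/-- `H'` is a pseudo-minor of `H`: obtained by a finite sequence of vertex
removals, edge removals, and edge contractions. -/
def IsPseudoMinor {V : Type*} [DecidableEq V] (H H' : Hypergraph' V) : Prop :=
  Relation.ReflTransGen PMStep H H'

/-- `H` is isomorphic to `Tetra(k)`: the hypergraph on `k` vertices whose edges
are exactly the complements of singletons. -/
def IsTetra {V : Type*} (k : ℕ) (H : Hypergraph' V) : Prop :=
  ∃ f : Fin k → V, Function.Injective f ∧
    H.edges = {e | ∃ i : Fin k, e = f '' {j | j ≠ i}}
/-- `H` is a chordless cycle hypergraph on `n ≥ 3` distinct vertices: its edges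
are exactly the consecutive pairs (cyclically). -/
def IsCycleHypergraph {V : Type*} (H : Hypergraph' V) : Prop :=
  ∃ (n : ℕ) (x : Fin (n + 3) → V), Function.Injective x ∧
    H.edges = {e | ∃ i : Fin (n + 3), e = {x i, x (i + 1)}}

/-- The pseudo-minors of `H` in `Tet_pm(H)`: isomorphic to some `Tetra(k)` and
obtained either by (1) vertex removals followed by all possible edge removals,
or (2) vertex and edge removals leading to a chordless cycle, followed by edge
contractions and edge removals yielding a `Tetra(3)`. -/
def TetPM {V : Type*} [DecidableEq V] (H Hpm : Hypergraph' V) : Prop :=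
  ((∃ H₁ : Hypergraph' V, Relation.ReflTransGen VertexRemoval H H₁ ∧
      Relation.ReflTransGen EdgeRemoval H₁ Hpm ∧
      ∀ H₂ : Hypergraph' V, ¬ EdgeRemoval Hpm H₂) ∨
    (∃ H₁ : Hypergraph' V,
      Relation.ReflTransGen (fun a b => VertexRemoval a b ∨ EdgeRemoval a b) H H₁ ∧
      IsCycleHypergraph H₁ ∧
      Relation.ReflTransGen (fun a b => EdgeContraction a b ∨ EdgeRemoval a b) H₁ Hpm ∧
      IsTetra 3 Hpm)) ∧
  ∃ k : ℕ, 3 ≤ k ∧ IsTetra k Hpm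

/-!
Vertex and edge removals replace every edge by its trace on the surviving vertices (or drop it
inside a larger one), so the FD `X → y` — every edge containing `X` contains `y` — survives as
long as `y` does, and so does an edge covering `X ∪ {y}` as long as `X ∪ {y}` survives;
contractions only shrink the vertex set. In `Tetra(k)` the edge `V \ {y}` contains `X` but not
`y`. In a chordless cycle the edge covering `X ∪ {y}` is `{y, b}` with `X ⊆ {b}`, and the other
edge through `b` misses `y`.
-/

namespace Hypergraph'

variable {V : Type*}

def SatisfiesFD (H : Hypergraph' V) (X : Set V) (y : V) : Prop :=
  ∀ e ∈ H.edges, X ⊆ e → y ∈ e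

theorem mem_vertexSet {H : Hypergraph' V} {w : V} :
    w ∈ H.vertexSet ↔ ∃ e ∈ H.edges, w ∈ e := by
  simp [vertexSet]

theorem subset_vertexSet {H : Hypergraph' V} {e : Set V} (he : e ∈ H.edges) :
    e ⊆ H.vertexSet :=
  fun _ hw => Set.mem_biUnion he hw

theorem vertexSet_subset_of_reflTransGen {r : Hypergraph' V → Hypergraph' V → Prop}
    (hr : ∀ a b, r a b → b.vertexSet ⊆ a.vertexSet) {H H' : Hypergraph' V}
    (h : Relation.ReflTransGen r H H') : H'.vertexSet ⊆ H.vertexSet := by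
  induction h with
  | refl => exact subset_rfl
  | tail _ hstep ih => exact (hr _ _ hstep).trans ih

end Hypergraph'

open Hypergraph'

section Removal

variable {V : Type*} {H H' : Hypergraph' V}

namespace VertexRemovalOf

variable {v : V}

theorem not_mem_vertexSet (h : VertexRemovalOf v H H') : v ∉ H'.vertexSet := by
  rw [mem_vertexSet, h]
  rintro ⟨_, ⟨e, -, rfl, -⟩, hv⟩
  exact hv.2 rfl

theorem vertexSet_subset (h : VertexRemovalOf v H H') : H'.vertexSet ⊆ H.vertexSet := by
  intro w hw
  rw [mem_vertexSet, h] at hw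
  obtain ⟨_, ⟨e, he, rfl, -⟩, hw⟩ := hw
  exact subset_vertexSet he hw.1

theorem satisfiesFD (h : VertexRemovalOf v H H') {X : Set V} {y : V}
    (hfd : H.SatisfiesFD X y) (hy : y ∈ H'.vertexSet) : H'.SatisfiesFD X y := by
  intro f hf hXf
  rw [h] at hf
  obtain ⟨e, he, rfl, -⟩ := hf
  refine ⟨hfd e he (hXf.trans Set.sdiff_subset), ?_⟩
  rintro rfl
  exact h.not_mem_vertexSet hy

theorem exists_superset_edge (h : VertexRemovalOf v H H') {S : Set V}
    (hS : S.Nonempty) (hSV : S ⊆ H'.vertexSet) (hcov : ∃ e ∈ H.edges, S ⊆ e) :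
    ∃ f ∈ H'.edges, S ⊆ f := by
  obtain ⟨e, he, hSe⟩ := hcov
  have hSf : S ⊆ e \ {v} := fun w hw =>
    ⟨hSe hw, fun hwv => h.not_mem_vertexSet (hwv ▸ hSV hw)⟩
  rw [h]
  exact ⟨e \ {v}, ⟨e, he, rfl, hS.mono hSf⟩, hSf⟩

end VertexRemovalOf

namespace EdgeRemoval

theorem edges_subset (h : EdgeRemoval H H') : H'.edges ⊆ H.edges := by
  obtain ⟨_, -, -, hE⟩ := h
  rw [hE]
  exact Set.sdiff_subset

theorem vertexSet_subset (h : EdgeRemoval H H') : H'.vertexSet ⊆ H.vertexSet :=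
  Set.biUnion_subset_biUnion_left h.edges_subset

theorem satisfiesFD (h : EdgeRemoval H H') {X : Set V} {y : V}
    (hfd : H.SatisfiesFD X y) : H'.SatisfiesFD X y :=
  fun f hf => hfd f (h.edges_subset hf)

theorem exists_superset_edge (h : EdgeRemoval H H') {S : Set V}
    (hcov : ∃ e ∈ H.edges, S ⊆ e) : ∃ f ∈ H'.edges, S ⊆ f := by
  obtain ⟨e₀, -, ⟨e', he', hne, hsub⟩, hE⟩ := h
  obtain ⟨e, he, hSe⟩ := hcov
  rw [hE]
  by_cases he₀ : e = e₀
  · exact ⟨e', ⟨he', hne⟩, he₀ ▸ hSe |>.trans hsub⟩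
  · exact ⟨e, ⟨he, he₀⟩, hSe⟩

end EdgeRemoval

theorem EdgeContraction.vertexSet_subset [DecidableEq V] (h : EdgeContraction H H') :
    H'.vertexSet ⊆ H.vertexSet := by
  obtain ⟨u, v, -, ⟨e₀, he₀, hu, -⟩, hE⟩ := h
  intro w hw
  rw [mem_vertexSet, hE] at hw
  obtain ⟨_, ⟨e, he, rfl⟩, z, hz, rfl⟩ := hw
  dsimp only
  split_ifs
  · exact subset_vertexSet he₀ hu
  · exact subset_vertexSet he hz

end Removal

section RemovalChain

variable {V : Type*} {H H' : Hypergraph' V}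

theorem satisfiesFD_of_removals
    (h : Relation.ReflTransGen (fun a b => VertexRemoval a b ∨ EdgeRemoval a b) H H')
    {X : Set V} {y : V} (hfd : H.SatisfiesFD X y) (hy : y ∈ H'.vertexSet) :
    H'.SatisfiesFD X y := by
  induction h with
  | refl => exact hfd
  | tail _ hstep ih =>
    rcases hstep with ⟨v, hv⟩ | he
    · exact hv.satisfiesFD (ih (hv.vertexSet_subset hy)) hy
    · exact he.satisfiesFD (ih (he.vertexSet_subset hy))

theorem exists_superset_edge_of_removals
    (h : Relation.ReflTransGen (fun a b => VertexRemoval a b ∨ EdgeRemoval a b) H H')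
    {S : Set V} (hS : S.Nonempty) (hSV : S ⊆ H'.vertexSet) (hcov : ∃ e ∈ H.edges, S ⊆ e) :
    ∃ f ∈ H'.edges, S ⊆ f := by
  induction h with
  | refl => exact hcov
  | tail _ hstep ih =>
    rcases hstep with ⟨v, hv⟩ | he
    · exact hv.exists_superset_edge hS hSV (ih (hSV.trans hv.vertexSet_subset))
    · exact he.exists_superset_edge (ih (hSV.trans he.vertexSet_subset))

end RemovalChain

theorem IsTetra.vertexSet_diff_singleton_mem_edges {V : Type*} {k : ℕ} {H : Hypergraph' V}
    (h : IsTetra k H) {y : V} (hy : y ∈ H.vertexSet) : H.vertexSet \ {y} ∈ H.edges := by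
  obtain ⟨f, hf, hE⟩ := h
  have hV : H.vertexSet ⊆ Set.range f := by
    intro w hw
    rw [mem_vertexSet, hE] at hw
    obtain ⟨_, ⟨i, rfl⟩, j, -, rfl⟩ := hw
    exact ⟨j, rfl⟩
  obtain ⟨j₀, rfl⟩ := hV hy
  have hmem : f '' {j | j ≠ j₀} ∈ H.edges := hE ▸ ⟨j₀, rfl⟩
  convert hmem using 1
  apply Set.Subset.antisymm
  · rintro w ⟨hw, hne⟩
    obtain ⟨j, rfl⟩ := hV hw
    exact ⟨j, fun h => hne (h ▸ rfl), rfl⟩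
  · rintro _ ⟨j, hj, rfl⟩
    exact ⟨subset_vertexSet hmem ⟨j, hj, rfl⟩, fun h => hj (hf h)⟩

theorem Fin.sub_one_ne_add_one {n : ℕ} (i : Fin (n + 3)) : i - 1 ≠ i + 1 := by
  rw [ne_eq, sub_eq_iff_eq_add, add_assoc, left_eq_add, Fin.ext_iff]
  simp [Fin.val_add, Nat.mod_eq_of_lt (show 2 < n + 3 by omega)]

namespace IsCycleHypergraph

variable {V : Type*} {H : Hypergraph' V}

theorem exists_eq_pair_of_mem (hH : IsCycleHypergraph H) {e : Set V} (he : e ∈ H.edges)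
    {y : V} (hy : y ∈ e) : ∃ b, b ≠ y ∧ e = {y, b} := by
  obtain ⟨n, x, hx, hE⟩ := hH
  rw [hE] at he
  obtain ⟨i, rfl⟩ := he
  have hne : x i ≠ x (i + 1) := hx.ne (by simp)
  rcases hy with rfl | rfl
  · exact ⟨x (i + 1), hne.symm, rfl⟩
  · exact ⟨x i, hne, Set.pair_comm _ _⟩

theorem exists_edge_mem_not_mem (hH : IsCycleHypergraph H) {a b : V}
    (hb : b ∈ H.vertexSet) (hab : a ≠ b) : ∃ f ∈ H.edges, b ∈ f ∧ a ∉ f := by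
  obtain ⟨n, x, hx, hE⟩ := hH
  have hedge : ∀ i, {x i, x (i + 1)} ∈ H.edges := fun i => hE ▸ ⟨i, rfl⟩
  rw [mem_vertexSet, hE] at hb
  obtain ⟨_, ⟨i, rfl⟩, hbi⟩ := hb
  obtain ⟨j, rfl⟩ : ∃ j, b = x j := by
    rcases hbi with rfl | rfl
    exacts [⟨i, rfl⟩, ⟨i + 1, rfl⟩]
  -- `x j` lies on the two edges `{x (j - 1), x j}` and `{x j, x (j + 1)}`, which share only `x j`.
  by_contra! hall
  have hprev := hall _ (hedge (j - 1))
  have hnext := hall _ (hedge j)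
  rw [sub_add_cancel] at hprev
  simp only [Set.mem_insert_iff, Set.mem_singleton_iff, true_or, or_true, forall_const,
    hab, or_false, false_or] at hprev hnext
  exact Fin.sub_one_ne_add_one j (hx (hprev.symm.trans hnext))

theorem not_satisfiesFD (hH : IsCycleHypergraph H) {X : Set V} {y : V} (hyX : y ∉ X)
    (hcov : ∃ e ∈ H.edges, X ∪ {y} ⊆ e) : ¬ H.SatisfiesFD X y := by
  intro hfd
  obtain ⟨e, he, hXye⟩ := hcov
  obtain ⟨b, hby, rfl⟩ := hH.exists_eq_pair_of_mem he (hXye (Or.inr rfl))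
  have hXb : X ⊆ {b} := fun w hw =>
    (hXye (Or.inl hw)).resolve_left fun h => hyX (h ▸ hw)
  obtain ⟨f, hf, hbf, hyf⟩ :=
    hH.exists_edge_mem_not_mem (subset_vertexSet he (Or.inr rfl)) hby.symm
  exact hyf (hfd f hf (hXb.trans (Set.singleton_subset_iff.mpr hbf)))

end IsCycleHypergraph

theorem tetpm_misses_some_fd_variable_general
    {V : Type*} [DecidableEq V] (H Hpm : Hypergraph' V)
    (hpm : TetPM H Hpm)
    (X : Set V) (y : V)
    (hnontriv : y ∉ X)
    (hwit : ∃ e ∈ H.edges, X ⊆ e ∧ y ∈ e)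
    (hclosed : ∀ e ∈ H.edges, X ⊆ e → y ∈ e) :
    ¬ (X ∪ {y} ⊆ Hpm.vertexSet) := by
  intro hsub
  obtain ⟨hcase, k, -, htet⟩ := hpm
  rcases hcase with ⟨H₁, hvertex, hedge, -⟩ | ⟨H₁, hremove, hcycle, hcontract, -⟩
  · have hy : y ∈ Hpm.vertexSet := hsub (Or.inr rfl)
    have hfd : Hpm.SatisfiesFD X y := satisfiesFD_of_removals
      ((Relation.ReflTransGen.mono (fun _ _ => Or.inl) _ _ hvertex).trans
        (Relation.ReflTransGen.mono (fun _ _ => Or.inr) _ _ hedge)) hclosed hy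
    have hX : X ⊆ Hpm.vertexSet \ {y} := fun w hw =>
      ⟨hsub (Or.inl hw), fun h => hnontriv (h ▸ hw)⟩
    exact (hfd _ (htet.vertexSet_diff_singleton_mem_edges hy) hX).2 rfl
  · have hsub₁ : X ∪ {y} ⊆ H₁.vertexSet := hsub.trans <| vertexSet_subset_of_reflTransGen
      (fun _ _ h => h.elim EdgeContraction.vertexSet_subset EdgeRemoval.vertexSet_subset) hcontract
    obtain ⟨e, he, hXe, hye⟩ := hwit
    refine hcycle.not_satisfiesFD hnontriv ?_ (satisfiesFD_of_removals hremove hclosed ?_)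
    · exact exists_superset_edge_of_removals hremove ⟨y, Or.inr rfl⟩ hsub₁
        ⟨e, he, Set.union_subset hXe (Set.singleton_subset_iff.mpr hye)⟩
    · exact hsub₁ (Or.inr rfl)

/-- For a hypergraph `H = H(Q⁺)` of a cyclic FD-extension (so, by
the fixpoint property, each non-trivial FD `X → y` of `Δ_{Q⁺}` has `X ∪ {y}`
contained in some edge and every edge containing `X` contains `y`), and any
pseudo-minor `Hpm ∈ Tet_pm(H)`, not all of `X ∪ {y}` is contained in the vertex
set of `Hpm`. -/
theorem tetpm_misses_some_fd_variable
    {V : Type*} [DecidableEq V] (H Hpm : Hypergraph' V)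
    (hcyc : ¬ H.Acyclic)
    (hpm : TetPM H Hpm)
    (X : Set V) (y : V)
    (hnontriv : y ∉ X) (hXne : X.Nonempty)
    (hwit : ∃ e ∈ H.edges, X ⊆ e ∧ y ∈ e)
    (hclosed : ∀ e ∈ H.edges, X ⊆ e → y ∈ e) :
    ¬ (X ∪ {y} ⊆ Hpm.vertexSet) :=
  tetpm_misses_some_fd_variable_general H Hpm hpm X y hnontriv hwit hclosed
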